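/- arXiv:2211.04612 — 5 statements merged into one kernel-verified Lean document; each statement's English description precedes it below -/
import Mathlib

section
/- For integers M > M' ≥ 2, define h : [0,∞) → ℝ by h(δ) = ln((1+δ^{M−1})/(1+δ^{M'−1})) − (M−M')·ln(1+δ). Then h is strictly decreasing on [0,1). -/
/-!
Writing `L(n, δ) = ln(1 + δ^n) - n ln(1 + δ)`, the function in question is `L(M-1) - L(M'-1)`,
a telescoping sum of the consecutive differences `L(k+1) - L(k) = ln((1+δ^{k+1})/((1+δ^k)(1+δ)))`
with `k ≥ 1`. Each of these is strictly decreasing on `[0, 1)`: for `0 ≤ a < b < 1` the cross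
difference of the ratios equals `(b - a)(1 - (ab)^k) + (b^k - a^k)(1 - ab) > 0`.
-/

open Real Set

noncomputable def logOnePowGap (n : ℕ) (δ : ℝ) : ℝ :=
  log (1 + δ ^ n) - n * log (1 + δ)

lemma one_add_pow_succ_cross_lt {a b : ℝ} {k : ℕ} (hk : 1 ≤ k) (ha : 0 ≤ a) (hab : a < b)
    (hb : b < 1) :
    (1 + b ^ (k + 1)) * ((1 + a ^ k) * (1 + a)) < (1 + a ^ (k + 1)) * ((1 + b ^ k) * (1 + b)) := by
  have hab1 : a * b < 1 := by nlinarith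
  have hpow : (a * b) ^ k < 1 := pow_lt_one₀ (mul_nonneg ha (ha.trans hab.le)) hab1 (by omega)
  have hpow_le : a ^ k ≤ b ^ k := pow_le_pow_left₀ ha hab.le k
  have hcross : (1 + a ^ (k + 1)) * ((1 + b ^ k) * (1 + b)) -
      (1 + b ^ (k + 1)) * ((1 + a ^ k) * (1 + a)) =
      (b - a) * (1 - (a * b) ^ k) + (b ^ k - a ^ k) * (1 - a * b) := by
    ring
  linarith [mul_pos (sub_pos.2 hab) (sub_pos.2 hpow),
    mul_nonneg (sub_nonneg.2 hpow_le) (sub_pos.2 hab1).le]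

lemma strictAntiOn_logOnePowGap_succ_sub {k : ℕ} (hk : 1 ≤ k) :
    StrictAntiOn (fun δ => logOnePowGap (k + 1) δ - logOnePowGap k δ) (Ico 0 1) := by
  rintro a ⟨ha, -⟩ b ⟨-, hb⟩ hab
  have hb0 : 0 ≤ b := ha.trans hab.le
  have hlog := log_lt_log (by positivity) (one_add_pow_succ_cross_lt hk ha hab hb)
  rw [log_mul (by positivity) (by positivity), log_mul (by positivity) (by positivity),
    log_mul (by positivity) (by positivity), log_mul (by positivity) (by positivity)] at hlog
  simp only [logOnePowGap]
  push_cast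
  linarith

lemma strictAntiOn_logOnePowGap_sub {m n : ℕ} (hm : 1 ≤ m) (hmn : m < n) :
    StrictAntiOn (fun δ => logOnePowGap n δ - logOnePowGap m δ) (Ico 0 1) := by
  induction n, hmn using Nat.le_induction with
  | base => exact strictAntiOn_logOnePowGap_succ_sub hm
  | succ n hmn ih =>
    refine ((strictAntiOn_logOnePowGap_succ_sub (k := n) (by omega)).add ih).congr ?_
    intro δ _
    ring

/-- For integers `M > M' ≥ 2`, the function
`h(δ) = ln((1 + δ^{M−1})/(1 + δ^{M'−1})) − (M − M')·ln(1 + δ)`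
is strictly decreasing on `[0, 1)`. -/
theorem h_strictAntiOn (M M' : ℕ) (h2 : 2 ≤ M') (hMM : M' < M) :
    StrictAntiOn
      (fun δ : ℝ =>
        Real.log ((1 + δ ^ (M - 1)) / (1 + δ ^ (M' - 1))) -
          ((M : ℝ) - (M' : ℝ)) * Real.log (1 + δ))
      (Set.Ico (0 : ℝ) 1) := by
  refine (strictAntiOn_logOnePowGap_sub (m := M' - 1) (n := M - 1) (by omega) (by omega)).congr ?_
  rintro δ ⟨hδ, -⟩
  simp only [logOnePowGap]
  rw [log_div (by positivity) (by positivity), Nat.cast_sub (by omega : 1 ≤ M),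
    Nat.cast_sub (by omega : 1 ≤ M')]
  ring
end

section
/- Let P and Q be probability distributions on a two-point set {a_1, a_2} with first-symbol probabilities p and q respectively, where p ≠ q and both p, q lie in (c, 1−c), with c the unique root in (0,1/2) of c^{M−1}+(1−c)^{M−1} = 2/M for some M ≥ 3. Let U_P and U_Q denote the distributions of a uniformly chosen element of the set of unique values of M i.i.d. draws from P and Q, respectively. Then the total variation distance satisfies TV(U_P, U_Q) < TV(P, Q) = |p − q|. -/
/-!
On a two-point set the total variation distance is just the difference of the first-symbol
probabilities, so the claim is `|d p - d q| < |p - q|` for `d x = (x^M - (1-x)^M)/2`. By the mean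
value theorem it suffices that `d' x = M/2 · (x^(M-1) + (1-x)^(M-1)) < 1` on `(c, 1-c)`. The function
`x^(M-1) + (1-x)^(M-1)` is strictly convex on `[0, 1]` (as `M - 1 ≥ 2`) and symmetric about `1/2`,
so on the open interval `(c, 1-c)` it stays strictly below its common endpoint value `2/M`.
-/

open Set

theorem strictConvexOn_pow_add_one_sub_pow {n : ℕ} (hn : 2 ≤ n) :
    StrictConvexOn ℝ (Icc 0 1) fun x : ℝ => x ^ n + (1 - x) ^ n := by
  refine ((strictConvexOn_pow hn).subset Icc_subset_Ici_self (convex_Icc 0 1)).add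
    ⟨convex_Icc 0 1, fun x hx y hy hxy a b ha hb hab => ?_⟩
  have h := (strictConvexOn_pow hn).2 (x := 1 - x) (y := 1 - y) (sub_nonneg.2 hx.2)
    (sub_nonneg.2 hy.2) (by simpa using hxy) ha hb hab
  convert h using 2
  simp only [smul_eq_mul]
  linear_combination (-1 : ℝ) * hab

theorem pow_add_one_sub_pow_lt {n : ℕ} (hn : 2 ≤ n) {c x : ℝ} (hc : 0 ≤ c)
    (hx : x ∈ Ioo c (1 - c)) : x ^ n + (1 - x) ^ n < c ^ n + (1 - c) ^ n := by
  have hc' : c < 1 - c := hx.1.trans hx.2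
  have h := (strictConvexOn_pow_add_one_sub_pow hn).lt_on_openSegment
    (⟨hc, by linarith⟩ : c ∈ Icc (0 : ℝ) 1) (⟨by linarith, by linarith⟩ : 1 - c ∈ Icc (0 : ℝ) 1)
    hc'.ne (by rwa [openSegment_eq_Ioo hc'])
  simpa only [sub_sub_cancel, add_comm (c ^ n), max_self] using h

theorem abs_sub_lt_mul_of_hasDerivAt {f f' : ℝ → ℝ} {s : Set ℝ} {K : ℝ} (hs : s.OrdConnected)
    (hf : ∀ x ∈ s, HasDerivAt f (f' x) x) (hf' : ∀ x ∈ s, |f' x| < K) {a b : ℝ}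
    (ha : a ∈ s) (hb : b ∈ s) (hab : a ≠ b) : |f a - f b| < K * |a - b| := by
  wlog h : a < b generalizing a b
  · rw [abs_sub_comm, abs_sub_comm a]
    exact this hb ha hab.symm (hab.symm.lt_of_le (not_lt.1 h))
  have hIcc : Icc a b ⊆ s := hs.out ha hb
  obtain ⟨ξ, hξ, hslope⟩ := exists_hasDerivAt_eq_slope f f' h
    (HasDerivAt.continuousOn fun x hx => hf x (hIcc hx))
    (fun x hx => hf x (hIcc (Ioo_subset_Icc_self hx)))
  have hba : 0 < b - a := sub_pos.2 h
  have hmvt : f b - f a = f' ξ * (b - a) := by rw [hslope, div_mul_cancel₀ _ hba.ne']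
  rw [abs_sub_comm, hmvt, abs_sub_comm, abs_mul, abs_of_pos hba]
  exact mul_lt_mul_of_pos_right (hf' ξ (hIcc (Ioo_subset_Icc_self hξ))) hba

/-- `U_P` puts mass `1/2 + uniqueBias M p` on the first symbol. -/
noncomputable def uniqueBias (M : ℕ) (p : ℝ) : ℝ := (p ^ M - (1 - p) ^ M) / 2

theorem hasDerivAt_uniqueBias (M : ℕ) (x : ℝ) :
    HasDerivAt (uniqueBias M) (M / 2 * (x ^ (M - 1) + (1 - x) ^ (M - 1))) x := by
  have h : HasDerivAt (fun y : ℝ => (y ^ M - (1 - y) ^ M) / 2) _ x :=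
    ((hasDerivAt_pow M x).sub ((hasDerivAt_pow M (1 - x)).comp x
      ((hasDerivAt_id x).const_sub 1))).div_const 2
  exact h.congr_deriv (by ring)

theorem abs_deriv_uniqueBias_lt {M : ℕ} (hM : 3 ≤ M) {c x : ℝ} (hc : 0 ≤ c)
    (heq : c ^ (M - 1) + (1 - c) ^ (M - 1) = 2 / (M : ℝ)) (hx : x ∈ Ioo c (1 - c)) :
    |M / 2 * (x ^ (M - 1) + (1 - x) ^ (M - 1))| < 1 := by
  have hM0 : (0 : ℝ) < M := by positivity
  have hsum := pow_add_one_sub_pow_lt (n := M - 1) (by omega) hc hx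
  rw [heq] at hsum
  have hnonneg : 0 ≤ x ^ (M - 1) + (1 - x) ^ (M - 1) :=
    add_nonneg (pow_nonneg (by linarith [hx.1]) _) (pow_nonneg (by linarith [hx.2]) _)
  rw [abs_of_nonneg (by positivity)]
  calc (M : ℝ) / 2 * (x ^ (M - 1) + (1 - x) ^ (M - 1)) < M / 2 * (2 / M) := by gcongr
    _ = 1 := by field_simp

theorem abs_uniqueBias_sub_lt {M : ℕ} (hM : 3 ≤ M) {c p q : ℝ} (hc : 0 ≤ c)
    (heq : c ^ (M - 1) + (1 - c) ^ (M - 1) = 2 / (M : ℝ))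
    (hp : p ∈ Ioo c (1 - c)) (hq : q ∈ Ioo c (1 - c)) (hpq : p ≠ q) :
    |uniqueBias M p - uniqueBias M q| < |p - q| := by
  simpa only [one_mul] using abs_sub_lt_mul_of_hasDerivAt ordConnected_Ioo
    (fun x _ => hasDerivAt_uniqueBias M x) (fun x hx => abs_deriv_uniqueBias_lt hM hc heq hx)
    hp hq hpq

/-- Total variation contraction for the distribution of a uniformly chosen unique
element of `M` i.i.d. draws from a two-point distribution.  If `P, Q` put probabilities
`p, q` on the first symbol, then `U_P` puts probability `uP = (1 + p^M − (1−p)^M)/2` on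
the first symbol (and `1 − uP` on the second), and similarly for `U_Q`.  Writing total
variation on the two-point set explicitly as half the ℓ¹ distance, one has
`TV(U_P, U_Q) < TV(P, Q) = |p − q|` whenever `p ≠ q` both lie in `(c, 1−c)`, where `c`
is the unique root in `(0, 1/2)` of `c^{M−1} + (1−c)^{M−1} = 2/M`. -/
theorem tv_contraction_unique (M : ℕ) (hM : 3 ≤ M)
    (c : ℝ) (hc : c ∈ Set.Ioo (0 : ℝ) (1 / 2))
    (heq : c ^ (M - 1) + (1 - c) ^ (M - 1) = 2 / (M : ℝ))
    (p q : ℝ) (hp : p ∈ Set.Ioo c (1 - c)) (hq : q ∈ Set.Ioo c (1 - c)) (hpq : p ≠ q)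
    (uP uQ : ℝ)
    (huP : uP = (1 + p ^ M - (1 - p) ^ M) / 2)
    (huQ : uQ = (1 + q ^ M - (1 - q) ^ M) / 2) :
    (|uP - uQ| + |(1 - uP) - (1 - uQ)|) / 2 < (|p - q| + |(1 - p) - (1 - q)|) / 2 ∧
      (|p - q| + |(1 - p) - (1 - q)|) / 2 = |p - q| := by
  have two_point_tv (u v : ℝ) : (|u - v| + |(1 - u) - (1 - v)|) / 2 = |u - v| := by
    rw [sub_sub_sub_cancel_left, abs_sub_comm]
    ring
  have huPQ : uP - uQ = uniqueBias M p - uniqueBias M q := by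
    rw [huP, huQ, uniqueBias, uniqueBias]
    ring
  rw [two_point_tv, two_point_tv, huPQ]
  exact ⟨abs_uniqueBias_sub_lt hM hc.1.le heq hp hq hpq, rfl⟩
end

section
/- Let n ≥ 1 and α ∈ (0,1), and let E_1,…,E_n, E_{n+1} be exchangeable real-valued random variables. Let Q̂ be the ⌈(1−α)(n+1)⌉-th smallest value among E_1,…,E_n (with Q̂ = +∞ if ⌈(1−α)(n+1)⌉ > n). Then P(E_{n+1} ≤ Q̂) ≥ 1 − α. -/
open MeasureTheory Finset

/-!
When `1 ≤ k ≤ n`, the test score is at most the `k`-th smallest calibration score exactly when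
fewer than `k` of all `n + 1` scores lie strictly below it. For every outcome at least `k` of
the `n + 1` scores have this property, and by exchangeability each score has it with the same
probability `p`; hence `k ≤ (n + 1) p`, while `k ≥ (1 - α)(n + 1)`.
-/

theorem List.Pairwise.le_getElem_iff_countP_le {β : Type*} [LinearOrder β] {l : List β}
    (hl : l.Pairwise (· ≤ ·)) {j : ℕ} (hj : j < l.length) (a : β) :
    a ≤ l[j] ↔ l.countP (· < a) ≤ j := by
  have mono {i i' : ℕ} (hi : i < l.length) (hi' : i' < l.length) (h : i ≤ i') : l[i] ≤ l[i'] :=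
    hl.rel_get_of_le (a := ⟨i, hi⟩) (b := ⟨i', hi'⟩) h
  constructor
  · intro ha
    have hdrop : (l.drop j).countP (· < a) = 0 := by
      refine List.countP_eq_zero.2 fun b hb => ?_
      obtain ⟨i, hi, rfl⟩ := List.mem_iff_getElem.1 hb
      simpa using ha.trans (mono hj (by simp at hi; omega) (by omega))
    calc l.countP (· < a) = (l.take j).countP (· < a) + (l.drop j).countP (· < a) := by
          rw [← List.countP_append, List.take_append_drop]
      _ ≤ j := by
          rw [hdrop, add_zero]
          exact List.countP_le_length.trans (List.length_take_le _ _)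
  · intro hcount
    by_contra! hlt
    have htake : (l.take (j + 1)).countP (· < a) = j + 1 := by
      rw [List.countP_eq_length.2 fun b hb => ?_, List.length_take_of_le hj]
      obtain ⟨i, hi, rfl⟩ := List.mem_iff_getElem.1 hb
      simp only [List.getElem_take, decide_eq_true_eq]
      exact (mono (by simp at hi; omega) hj (by simp at hi; omega)).trans_lt hlt
    have := (List.take_sublist (j + 1) l).countP_le (p := (· < a))
    omega

theorem Multiset.le_sort_getD_iff_countP_lt {β : Type*} [LinearOrder β] (m : Multiset β)
    {k : ℕ} (hk1 : 1 ≤ k) (hk : k ≤ Multiset.card m) (a d : β) :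
    a ≤ (m.sort (· ≤ ·)).getD (k - 1) d ↔ m.countP (· < a) < k := by
  have hj : k - 1 < (m.sort (· ≤ ·)).length := by rw [Multiset.length_sort]; omega
  rw [List.getD_eq_getElem _ _ hj, (m.pairwise_sort _).le_getElem_iff_countP_le hj,
    ← Multiset.coe_countP, Multiset.sort_eq]
  omega

section Rank

variable {ι β : Type*} [Fintype ι] [LinearOrder β]

def numBelow (x : ι → β) (i : ι) : ℕ := #{j | x j < x i}

theorem numBelow_comp_perm (x : ι → β) (σ : Equiv.Perm ι) (i : ι) :
    numBelow (x ∘ σ) i = numBelow x (σ i) :=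
  card_equiv σ fun j => by simp

theorem le_card_filter_numBelow_lt (x : ι → β) {k : ℕ} (hk : k ≤ Fintype.card ι) :
    k ≤ #{i | numBelow x i < k} := by
  classical
  set S : Finset ι := {i | numBelow x i < k}
  by_contra! hS
  -- an index outside `S` with the smallest value has only indices of `S` strictly below it
  obtain ⟨i, hiS, hmin⟩ := Sᶜ.exists_min_image x (by rw [← card_pos, card_compl]; omega)
  have hbelow : numBelow x i ≤ #S := card_le_card fun j hj => by
    by_contra hjS
    exact (hmin j (mem_compl.2 hjS)).not_gt (mem_filter.1 hj).2
  exact mem_compl.1 hiS (mem_filter.2 ⟨mem_univ i, by omega⟩)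

theorem last_le_sort_getD_iff_numBelow_lt {n k : ℕ} (hk1 : 1 ≤ k) (hkn : k ≤ n)
    (x : Fin (n + 1) → β) (d : β) :
    x (Fin.last n) ≤ (Multiset.sort (Multiset.ofList (List.ofFn fun i : Fin n => x i.castSucc))
        (· ≤ ·)).getD (k - 1) d ↔ numBelow x (Fin.last n) < k := by
  have hcount : numBelow x (Fin.last n) =
      Multiset.countP (· < x (Fin.last n)) (List.ofFn fun i : Fin n => x i.castSucc) := by
    rw [numBelow, ← Fin.univ_val_map, Multiset.countP_map, card_filter, Fin.sum_univ_castSucc]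
    simp only [lt_irrefl, if_false, add_zero, ← card_filter]
    rfl
  rw [Multiset.le_sort_getD_iff_countP_lt _ hk1 (by simpa using hkn), hcount]

end Rank

section Exchangeable

variable {ι Ω β : Type*} [Fintype ι] [MeasurableSpace Ω] [MeasurableSpace β] [TopologicalSpace β]
  [LinearOrder β] [OrderClosedTopology β] [SecondCountableTopology β] [OpensMeasurableSpace β]

theorem measurable_numBelow (i : ι) : Measurable fun x : ι → β => numBelow x i := by
  simp only [numBelow, card_filter]
  exact Finset.measurable_sum _ fun j _ => Measurable.ite
    (measurableSet_lt (measurable_pi_apply j) (measurable_pi_apply i)) measurable_const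
    measurable_const

theorem le_sum_measure_of_le_card_filter_mem (μ : Measure Ω) (A : ι → Set Ω)
    [∀ ω, DecidablePred (ω ∈ A ·)] (hA : ∀ i, MeasurableSet (A i)) {k : ℕ}
    (h : ∀ ω, k ≤ #{i | ω ∈ A i}) : k * μ Set.univ ≤ ∑ i, μ (A i) := by
  calc k * μ Set.univ = ∫⁻ _, (k : ENNReal) ∂μ := (lintegral_const _).symm
    _ ≤ ∫⁻ ω, ∑ i, (A i).indicator 1 ω ∂μ := lintegral_mono fun ω => by
        simp only [Set.indicator_apply, Pi.one_apply, sum_boole]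
        exact_mod_cast h ω
    _ = ∑ i, μ (A i) := by
        rw [lintegral_finsetSum _ fun i _ => measurable_one.indicator (hA i)]
        simp only [lintegral_indicator_one (hA _)]

variable (μ : Measure Ω) (E : ι → Ω → β) (hmeas : ∀ i, Measurable (E i))
  (hexch : ∀ σ : Equiv.Perm ι,
    Measure.map (fun ω i => E (σ i) ω) μ = Measure.map (fun ω i => E i ω) μ)
include hmeas hexch

theorem measure_numBelow_lt_eq_of_exchangeable (k : ℕ) (i j : ι) :
    μ {ω | numBelow (fun l => E l ω) i < k} = μ {ω | numBelow (fun l => E l ω) j < k} := by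
  classical
  have hS : MeasurableSet {x : ι → β | numBelow x j < k} :=
    measurable_numBelow j measurableSet_Iio
  have hswap : {ω | numBelow (fun l => E (Equiv.swap i j l) ω) j < k} =
      {ω | numBelow (fun l => E l ω) i < k} := by
    ext ω
    simp only [Set.mem_ofPred_eq]
    rw [← Function.comp_def (fun l => E l ω), numBelow_comp_perm, Equiv.swap_apply_right]
  have hmap := congrArg (· {x : ι → β | numBelow x j < k}) (hexch (Equiv.swap i j))
  rw [Measure.map_apply (measurable_pi_lambda _ fun l => hmeas _) hS,
    Measure.map_apply (measurable_pi_lambda _ hmeas) hS] at hmap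
  rw [← hswap]
  exact hmap

theorem le_card_mul_measureReal_numBelow_lt [IsProbabilityMeasure μ] {k : ℕ}
    (hk : k ≤ Fintype.card ι) (j : ι) :
    (k : ℝ) ≤ Fintype.card ι * μ.real {ω | numBelow (fun l => E l ω) j < k} := by
  set A : ι → Set Ω := fun i => {ω | numBelow (fun l => E l ω) i < k}
  have hA (i : ι) : MeasurableSet (A i) :=
    (measurable_numBelow i measurableSet_Iio).preimage (measurable_pi_lambda _ hmeas)
  have hsum := le_sum_measure_of_le_card_filter_mem μ A hA fun ω =>
    le_card_filter_numBelow_lt (fun l => E l ω) hk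
  simp only [measure_univ, mul_one, A,
    measure_numBelow_lt_eq_of_exchangeable μ E hmeas hexch k _ j, sum_const, card_univ,
    nsmul_eq_mul] at hsum
  simpa [measureReal_def] using ENNReal.toReal_mono (by finiteness) hsum

end Exchangeable

theorem conformal_calibration_general
    {Ω : Type*} [MeasurableSpace Ω] (μ : Measure Ω) [IsProbabilityMeasure μ]
    (n : ℕ) (α : ℝ) (hα : α ∈ Set.Ioo (0 : ℝ) 1)
    (E : Fin (n + 1) → Ω → ℝ) (hmeas : ∀ i, Measurable (E i))
    (hexch : ∀ σ : Equiv.Perm (Fin (n + 1)),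
      Measure.map (fun ω (i : Fin (n + 1)) => E (σ i) ω) μ =
        Measure.map (fun ω (i : Fin (n + 1)) => E i ω) μ)
    (k : ℕ) (hk : k = ⌈(1 - α) * ((n : ℝ) + 1)⌉₊)
    (Qhat : Ω → EReal)
    (hQhat : ∀ ω, Qhat ω =
      if k ≤ n then
        (((Multiset.sort
            (Multiset.ofList (List.ofFn fun i : Fin n => E i.castSucc ω)) (· ≤ ·)).getD
          (k - 1) 0 : ℝ) : EReal)
      else ⊤) :
    1 - α ≤ (μ {ω | (E (Fin.last n) ω : EReal) ≤ Qhat ω}).toReal := by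
  obtain ⟨hα0, hα1⟩ := hα
  by_cases hkn : k ≤ n
  · have hk1 : 1 ≤ k := by
      rw [hk, Nat.one_le_ceil_iff]
      exact mul_pos (by linarith) (by positivity)
    have hevent : {ω | (E (Fin.last n) ω : EReal) ≤ Qhat ω} =
        {ω | numBelow (fun i => E i ω) (Fin.last n) < k} := by
      ext ω
      rw [Set.mem_ofPred_eq, hQhat, if_pos hkn, EReal.coe_le_coe_iff,
        last_le_sort_getD_iff_numBelow_lt hk1 hkn (fun i => E i ω)]
      rfl
    have hbound := le_card_mul_measureReal_numBelow_lt μ E hmeas hexch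
      (k := k) (by simp; omega) (Fin.last n)
    have hceil : (1 - α) * ((n : ℝ) + 1) ≤ k := hk ▸ Nat.le_ceil _
    rw [hevent, ← measureReal_def]
    simp only [Fintype.card_fin, Nat.cast_add, Nat.cast_one] at hbound
    nlinarith
  · have hevent : {ω | (E (Fin.last n) ω : EReal) ≤ Qhat ω} = Set.univ := by
      ext ω
      simp [hQhat, hkn]
    rw [hevent, measure_univ, ENNReal.toReal_one]
    linarith

/-- Conformal calibration lemma: if `E 0, …, E n` are exchangeable real random
variables (`n` calibration scores `E 0, …, E (n-1)` and a test score `E n`), and `Q̂`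
is the `⌈(1−α)(n+1)⌉`-th smallest value among the first `n` of them (`+∞` if
`⌈(1−α)(n+1)⌉ > n`), then `P(E n ≤ Q̂) ≥ 1 − α`. -/
theorem conformal_calibration
    {Ω : Type*} [MeasurableSpace Ω] (μ : Measure Ω) [IsProbabilityMeasure μ]
    (n : ℕ) (hn : 1 ≤ n) (α : ℝ) (hα : α ∈ Set.Ioo (0 : ℝ) 1)
    (E : Fin (n + 1) → Ω → ℝ) (hmeas : ∀ i, Measurable (E i))
    (hexch : ∀ σ : Equiv.Perm (Fin (n + 1)),
      Measure.map (fun ω (i : Fin (n + 1)) => E (σ i) ω) μ =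
        Measure.map (fun ω (i : Fin (n + 1)) => E i ω) μ)
    (k : ℕ) (hk : k = ⌈(1 - α) * ((n : ℝ) + 1)⌉₊)
    (Qhat : Ω → EReal)
    (hQhat : ∀ ω, Qhat ω =
      if k ≤ n then
        (((Multiset.sort
            (Multiset.ofList (List.ofFn fun i : Fin n => E i.castSucc ω)) (· ≤ ·)).getD
          (k - 1) 0 : ℝ) : EReal)
      else ⊤) :
    1 - α ≤ (μ {ω | (E (Fin.last n) ω : EReal) ≤ Qhat ω}).toReal :=
  conformal_calibration_general μ n α hα E hmeas hexch k hk Qhat hQhat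
end

section
/- Let Z_1,…,Z_{m+1} be exchangeable random variables taking values in a countable set 𝒵, and let m_0 ≤ m. Define Y_i = ∑_{i'=m_0+1}^{m} 1{Z_{i'} = Z_i} and X_i = (Z_i, φ(Z_{m_0+1},…,Z_m)) for i ∈ {1,…,m_0, m+1}, where φ is any fixed function of (Z_{m_0+1},…,Z_m). Then the pairs (X_1,Y_1),…,(X_{m_0},Y_{m_0}),(X_{m+1},Y_{m+1}) are exchangeable. -/
open MeasureTheory ProbabilityTheory

/-! The permutation `σ` of the retained indices `0, …, m₀ - 1, m` extends to a permutation `τ`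
of `ℕ` fixing the sketched block `[m₀, m)` and everything beyond `m`, so by exchangeability the
path `n ↦ Z (τ n)` has the law of `Z`. The pairs are a fixed measurable function of the path, and
precomposing the path with `τ` permutes them while leaving `φ` of the sketched block and the
counts over it unchanged. -/

section PairStatistic

variable {𝒵 C : Type*} [DecidableEq 𝒵] (m m₀ : ℕ) (φ : (Fin (m - m₀) → 𝒵) → C)

def pairStat (f : ℕ → 𝒵) (n : ℕ) : (𝒵 × C) × ℕ :=
  ((f n, φ fun t => f (m₀ + t)), ((Finset.Ico m₀ m).filter fun i => f i = f n).card)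

variable {m m₀}

theorem pairStat_comp_of_forall_mem_Ico {τ : ℕ → ℕ} (hτ : ∀ n ∈ Finset.Ico m₀ m, τ n = n)
    (f : ℕ → 𝒵) (n : ℕ) : pairStat m m₀ φ (f ∘ τ) n = pairStat m m₀ φ f (τ n) := by
  have hblock :
      (fun t : Fin (m - m₀) => f (τ (m₀ + t))) = fun t : Fin (m - m₀) => f (m₀ + t) :=
    funext fun t => by rw [hτ _ (Finset.mem_Ico.2 ⟨by omega, by omega⟩)]
  simp only [pairStat, Function.comp_apply, hblock]
  congr 2
  exact Finset.filter_congr fun i hi => by rw [hτ i hi]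

theorem measurable_pairStat [Countable 𝒵] [MeasurableSpace 𝒵] [MeasurableSingletonClass 𝒵]
    [MeasurableSpace C] (n : ℕ) : Measurable fun f : ℕ → 𝒵 => pairStat m m₀ φ f n := by
  refine ((measurable_pi_apply n).prodMk ((measurable_of_countable φ).comp
    (measurable_pi_lambda _ fun t => measurable_pi_apply _))).prodMk ?_
  simp only [Finset.card_filter]
  refine Finset.measurable_sum _ fun i _ => Measurable.ite ?_ measurable_const measurable_const
  exact measurableSet_eq_fun (measurable_pi_apply i) (measurable_pi_apply n)

end PairStatistic

section PairIndex

variable (m m₀ : ℕ)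

def pairIndex (i : Fin (m₀ + 1)) : ℕ := if (i : ℕ) < m₀ then i else m

variable {m m₀}

theorem pairIndex_injective (h : m₀ ≤ m) : Function.Injective (pairIndex m m₀) := by
  intro i j hij
  have hi := i.isLt
  have hj := j.isLt
  unfold pairIndex at hij
  ext
  split_ifs at hij <;> omega

theorem pairIndex_le (h : m₀ ≤ m) (i : Fin (m₀ + 1)) : pairIndex m m₀ i ≤ m := by
  unfold pairIndex
  split_ifs <;> omega

theorem pairIndex_notMem_Ico (i : Fin (m₀ + 1)) : pairIndex m m₀ i ∉ Finset.Ico m₀ m := by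
  unfold pairIndex
  split_ifs <;> simp only [Finset.mem_Ico] <;> omega

end PairIndex

theorem pairs_exchangeable_general
    {Ω : Type*} [MeasurableSpace Ω] (μ : Measure Ω)
    {𝒵 : Type*} [Countable 𝒵] [MeasurableSpace 𝒵] [MeasurableSingletonClass 𝒵]
    [DecidableEq 𝒵]
    {C : Type*} [MeasurableSpace C]
    (m m₀ : ℕ) (hm₀ : m₀ ≤ m)
    (Z : ℕ → Ω → 𝒵) (hmeas : ∀ i, Measurable (Z i))
    (hexch : ∀ σ : Equiv.Perm ℕ, (∀ i, m + 1 ≤ i → σ i = i) →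
      Measure.map (fun ω (i : ℕ) => Z (σ i) ω) μ =
        Measure.map (fun ω (i : ℕ) => Z i ω) μ)
    (φ : (Fin (m - m₀) → 𝒵) → C)
    (r : Fin (m₀ + 1) → ℕ) (hr : ∀ i, r i = if (i : ℕ) < m₀ then (i : ℕ) else m)
    (Y : ℕ → Ω → ℕ)
    (hY : ∀ i ω, Y i ω = ((Finset.Ico m₀ m).filter fun i' => Z i' ω = Z i ω).card)
    (X : ℕ → Ω → 𝒵 × C)
    (hX : ∀ i ω, X i ω = (Z i ω, φ fun t => Z (m₀ + (t : ℕ)) ω)) :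
    ∀ σ : Equiv.Perm (Fin (m₀ + 1)),
      Measure.map (fun ω (i : Fin (m₀ + 1)) => (X (r (σ i)) ω, Y (r (σ i)) ω)) μ =
        Measure.map (fun ω (i : Fin (m₀ + 1)) => (X (r i) ω, Y (r i) ω)) μ := by
  intro σ
  obtain rfl : r = pairIndex m m₀ := funext hr
  set τ := σ.viaEmbedding ⟨pairIndex m m₀, pairIndex_injective hm₀⟩
  have hτ_fix {n : ℕ} (hn : ∀ i, pairIndex m m₀ i ≠ n) : τ n = n :=
    σ.viaEmbedding_apply_of_notMem _ n fun ⟨i, hi⟩ => hn i hi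
  have hτ_Ico (n : ℕ) (hn : n ∈ Finset.Ico m₀ m) : τ n = n :=
    hτ_fix fun i hi => pairIndex_notMem_Ico i (hi ▸ hn)
  have hτ_large (n : ℕ) (hn : m + 1 ≤ n) : τ n = n :=
    hτ_fix fun i hi => by have := pairIndex_le hm₀ i; omega
  have hZ : Measurable fun ω (n : ℕ) => Z n ω := measurable_pi_lambda _ hmeas
  have hlaw : IdentDistrib (fun ω n => Z (τ n) ω) (fun ω n => Z n ω) μ μ :=
    ⟨(measurable_pi_lambda _ fun n => hmeas (τ n)).aemeasurable, hZ.aemeasurable,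
      hexch τ hτ_large⟩
  have hpairs := (hlaw.comp (measurable_pi_lambda _ fun i =>
    measurable_pairStat φ (pairIndex m m₀ i))).map_eq
  convert hpairs using 2 <;> funext ω i
  · have hστ : τ (pairIndex m m₀ i) = pairIndex m m₀ (σ i) := σ.viaEmbedding_apply _ i
    change _ = pairStat m m₀ φ ((fun n => Z n ω) ∘ τ) (pairIndex m m₀ i)
    rw [pairStat_comp_of_forall_mem_Ico φ hτ_Ico, hστ]
    simp only [pairStat, hX, hY]
  · simp only [Function.comp_apply, pairStat, hX, hY]

/-- Exchangeability of the supervised pairs in conformalized sketching.  The data are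
`Z 0, …, Z (m-1)` and the query is `Z m` (so `Z 0, …, Z m` are the `m+1` exchangeable
variables).  For `i ∈ {0, …, m₀−1, m}` (encoded by `r i` for `i : Fin (m₀ + 1)`), set
`Y i = #{i' ∈ [m₀, m) : Z i' = Z i}` and `X i = (Z i, φ(Z m₀, …, Z (m-1)))`, where `φ`
is any fixed function of the sketched portion of the data.  Then the `m₀ + 1` pairs
`(X i, Y i)` are exchangeable. -/
theorem pairs_exchangeable
    {Ω : Type*} [MeasurableSpace Ω] (μ : Measure Ω) [IsProbabilityMeasure μ]
    {𝒵 : Type*} [Countable 𝒵] [MeasurableSpace 𝒵] [MeasurableSingletonClass 𝒵]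
    [DecidableEq 𝒵]
    {C : Type*} [MeasurableSpace C]
    (m m₀ : ℕ) (hm₀ : m₀ ≤ m)
    (Z : ℕ → Ω → 𝒵) (hmeas : ∀ i, Measurable (Z i))
    (hexch : ∀ σ : Equiv.Perm ℕ, (∀ i, m + 1 ≤ i → σ i = i) →
      Measure.map (fun ω (i : ℕ) => Z (σ i) ω) μ =
        Measure.map (fun ω (i : ℕ) => Z i ω) μ)
    (φ : (Fin (m - m₀) → 𝒵) → C)
    (r : Fin (m₀ + 1) → ℕ) (hr : ∀ i, r i = if (i : ℕ) < m₀ then (i : ℕ) else m)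
    (Y : ℕ → Ω → ℕ)
    (hY : ∀ i ω, Y i ω = ((Finset.Ico m₀ m).filter fun i' => Z i' ω = Z i ω).card)
    (X : ℕ → Ω → 𝒵 × C)
    (hX : ∀ i ω, X i ω = (Z i ω, φ fun t => Z (m₀ + (t : ℕ)) ω)) :
    ∀ σ : Equiv.Perm (Fin (m₀ + 1)),
      Measure.map (fun ω (i : Fin (m₀ + 1)) => (X (r (σ i)) ω, Y (r (σ i)) ω)) μ =
        Measure.map (fun ω (i : Fin (m₀ + 1)) => (X (r i) ω, Y (r i) ω)) μ :=
  pairs_exchangeable_general μ m m₀ hm₀ Z hmeas hexch φ r hr Y hY X hX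
end

section
/- For a > 1 and sufficiently large M' (specifically M' ≥ 2 ln(2a)/(a−1)), any solution δ ∈ [0,1] of a(δ^{aM'−1} + 1) = (1 + δ^{M'−1})(1+δ)^{(a−1)M'} satisfies δ ≤ ln(2a)/((a−1)M'); in particular δ ≤ 1/2. -/
/-!
Put `P = (a - 1) M'`. Since `δ ^ (aM' - 1) ≤ δ ^ (M' - 1)`, the equation forces `(1 + δ) ^ P ≤ a`.
Conversely `a ≤ (1 + log (2a) / P) ^ P` as soon as `P ≥ a - 1`: by `log (1 + y) ≥ 2y / (y + 2)` this
reduces to `log a · log (2a) ≤ 2 log 2 · (a - 1)`, which follows from the cubic Taylor bound on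
`a = exp (log a)`. Comparing the two `P`-th powers gives `δ ≤ log (2a) / P`, and `P ≥ 2 log (2a)`
makes this at most `1/2`.
-/

open Real

lemma Real.log_mul_log_two_mul_le {a : ℝ} (ha : 1 ≤ a) :
    log a * log (2 * a) ≤ 2 * log 2 * (a - 1) := by
  have hu : 0 ≤ log a := log_nonneg ha
  have hl : 1 / 2 < log 2 := lt_trans (by norm_num) log_two_gt_d9
  have hexp : 1 + log a + log a ^ 2 / 2 + log a ^ 3 / 6 ≤ a := by
    have := sum_le_exp_of_nonneg hu 4
    simp only [Finset.sum_range_succ, Finset.sum_range_zero, Nat.factorial] at this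
    rw [exp_log (by linarith)] at this
    norm_num at this
    linarith
  rw [log_mul two_ne_zero (by linarith)]
  nlinarith [mul_nonneg hu (sq_nonneg (log a - 3 / 2)), mul_nonneg hu hu]

lemma Real.le_one_add_log_two_mul_div_rpow {a P : ℝ} (ha : 1 ≤ a) (hP : 0 < P)
    (haP : a - 1 ≤ P) : a ≤ (1 + log (2 * a) / P) ^ P := by
  have hw : 0 < log (2 * a) := log_pos (by linarith)
  have hy : 0 ≤ log (2 * a) / P := by positivity
  rw [le_rpow_iff_log_le (by linarith) (by positivity)]
  calc log a ≤ P * (2 * (log (2 * a) / P) / (log (2 * a) / P + 2)) := by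
        rw [show P * (2 * (log (2 * a) / P) / (log (2 * a) / P + 2))
            = 2 * log (2 * a) * P / (log (2 * a) + 2 * P) by field_simp]
        rw [le_div_iff₀ (by positivity)]
        have := log_mul_log_two_mul_le ha
        rw [log_mul two_ne_zero (by linarith)] at this ⊢
        nlinarith [log_pos one_lt_two]
    _ ≤ P * log (1 + log (2 * a) / P) := by gcongr; exact le_log_one_add_of_nonneg hy

lemma le_of_mul_rpow_add_one_eq {a δ p q X : ℝ} (ha : 0 ≤ a) (hδ0 : 0 ≤ δ) (hδ1 : δ ≤ 1)
    (hp : 0 ≤ p) (hpq : p ≤ q) (h : a * (δ ^ q + 1) = (1 + δ ^ p) * X) : X ≤ a := by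
  have hq : δ ^ q ≤ δ ^ p := rpow_le_rpow_of_exponent_ge' hδ0 hδ1 hp hpq
  have hpos : 0 < 1 + δ ^ p := by positivity
  refine le_of_mul_le_mul_left ?_ hpos
  rw [← h, add_comm (δ ^ q), mul_comm]
  gcongr

theorem delta_bound_general (a : ℝ) (ha : 1 < a) (M' : ℕ)
    (hM' : 2 * Real.log (2 * a) / (a - 1) ≤ (M' : ℝ))
    (δ : ℝ) (hδ : δ ∈ Set.Icc (0 : ℝ) 1)
    (heq : a * (δ ^ (a * (M' : ℝ) - 1) + 1) =
      (1 + δ ^ ((M' : ℝ) - 1)) * (1 + δ) ^ ((a - 1) * (M' : ℝ))) :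
    δ ≤ Real.log (2 * a) / ((a - 1) * (M' : ℝ)) ∧ δ ≤ 1 / 2 := by
  obtain ⟨hδ0, hδ1⟩ := hδ
  have hw : 0 < log (2 * a) := log_pos (by linarith)
  rw [div_le_iff₀ (by linarith)] at hM'
  have hM : 1 ≤ (M' : ℝ) := by
    have : M' ≠ 0 := by rintro rfl; rw [Nat.cast_zero, zero_mul] at hM'; linarith
    exact_mod_cast Nat.one_le_iff_ne_zero.mpr this
  set P := (a - 1) * (M' : ℝ)
  have hP : a - 1 ≤ P := by nlinarith
  have hPpos : 0 < P := by positivity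
  have hpow : (1 + δ) ^ P ≤ a :=
    le_of_mul_rpow_add_one_eq (by linarith) hδ0 hδ1 (by linarith) (by nlinarith) heq
  have hδP : 1 + δ ≤ 1 + log (2 * a) / P :=
    (rpow_le_rpow_iff (by linarith) (by positivity) hPpos).mp
      (hpow.trans (le_one_add_log_two_mul_div_rpow ha.le hPpos hP))
  have hhalf : log (2 * a) / P ≤ 1 / 2 := by
    rw [div_le_iff₀ hPpos]; linarith
  exact ⟨by linarith, by linarith⟩

/-- For `a > 1` and `M'` large enough (`M' ≥ 2 ln(2a)/(a−1)`), with `aM'` an integer,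
any solution `δ ∈ [0,1]` of `a(δ^{aM'−1} + 1) = (1 + δ^{M'−1})(1+δ)^{(a−1)M'}`
satisfies `δ ≤ ln(2a)/((a−1)M')`; in particular `δ ≤ 1/2`. -/
theorem delta_bound (a : ℝ) (ha : 1 < a) (M' : ℕ)
    (hM' : 2 * Real.log (2 * a) / (a - 1) ≤ (M' : ℝ))
    (hint : ∃ N : ℕ, (N : ℝ) = a * (M' : ℝ))
    (δ : ℝ) (hδ : δ ∈ Set.Icc (0 : ℝ) 1)
    (heq : a * (δ ^ (a * (M' : ℝ) - 1) + 1) =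
      (1 + δ ^ ((M' : ℝ) - 1)) * (1 + δ) ^ ((a - 1) * (M' : ℝ))) :
    δ ≤ Real.log (2 * a) / ((a - 1) * (M' : ℝ)) ∧ δ ≤ 1 / 2 :=
  delta_bound_general a ha M' hM' δ hδ heq
end
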